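/- Fix an even integer k = 2q ≥ 6 and let J_k be the even interior gadget. Then there exists a k-leaf root R of J_k such that m_R(t) = k−1 and m_R(b) = 4. -/

import Mathlib

open SimpleGraph

/-- A vertex of a graph is a leaf if it has exactly one neighbor. -/
def IsLeafVert {W : Type} (T : SimpleGraph W) (w : W) : Prop := ∃! u, T.Adj w u

/-- `T` (a finite tree on vertex type `W`) together with the injection `f` of the
vertices of `G` onto the leaves of `T` is a `k`-leaf root of `G`:  the leaves of `T`
are exactly the image of `f`, and two distinct vertices of `G` are adjacent iff
their distance in `T` is at most `k`. -/
def IsLeafRoot {V W : Type} (G : SimpleGraph V) (k : ℕ)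
    (T : SimpleGraph W) (f : V → W) : Prop :=
  Finite W ∧ T.IsTree ∧ Function.Injective f ∧
    (∀ w : W, (∃ v, f v = w) ↔ IsLeafVert T w) ∧
    (∀ u v : V, u ≠ v → (G.Adj u v ↔ T.dist (f u) (f v) ≤ k))

/-- `G` is a `k`-leaf power: it admits a `k`-leaf root. -/
def IsKLeafPower {V : Type} (G : SimpleGraph V) (k : ℕ) : Prop :=
  ∃ (W : Type) (T : SimpleGraph W) (f : V → W), IsLeafRoot G k T f

/-- `m_T(v)`: the minimum over all `u ≠ v` of the distance in the leaf root `T`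
between the leaves corresponding to `u` and `v`. -/
noncomputable def mval {V W : Type} (T : SimpleGraph W) (f : V → W) (v : V) : ℕ :=
  sInf {d | ∃ u, u ≠ v ∧ T.dist (f u) (f v) = d}

/-- A vertex has degree at least three. -/
def HasDegreeGEThree {W : Type} (T : SimpleGraph W) (w : W) : Prop :=
  ∃ a b c : W, a ≠ b ∧ a ≠ c ∧ b ≠ c ∧ T.Adj w a ∧ T.Adj w b ∧ T.Adj w c

/-- A spine of a tree: a path containing every vertex of degree at least 3.  A tree
having a spine is exactly a caterpillar subdivision. -/
def IsSpine {W : Type} (T : SimpleGraph W) {a b : W} (p : T.Walk a b) : Prop :=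
  p.IsPath ∧ ∀ w : W, HasDegreeGEThree T w → w ∈ p.support

/-- A linear `k`-leaf root: a `k`-leaf root whose tree is a caterpillar subdivision. -/
def IsLinearLeafRoot {V W : Type} (G : SimpleGraph V) (k : ℕ)
    (T : SimpleGraph W) (f : V → W) : Prop :=
  IsLeafRoot G k T f ∧ ∃ (a b : W) (p : T.Walk a b), IsSpine T p

/-- `G` is a linear `k`-leaf power: it admits a linear `k`-leaf root. -/
def IsLinearKLeafPower {V : Type} (G : SimpleGraph V) (k : ℕ) : Prop :=
  ∃ (W : Type) (T : SimpleGraph W) (f : V → W), IsLinearLeafRoot G k T f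

/-- A cycle of length `n` in `G`, given as an injective map from `ZMod n` with
consecutive images adjacent. -/
def IsCycleIn {V : Type} (G : SimpleGraph V) (n : ℕ) (f : ZMod n → V) : Prop :=
  Function.Injective f ∧ ∀ i : ZMod n, G.Adj (f i) (f (i + 1))

/-- `G` is chordal: every cycle of length at least 4 has a chord. -/
def Chordal {V : Type} (G : SimpleGraph V) : Prop :=
  ∀ n : ℕ, 4 ≤ n → ∀ f : ZMod n → V, IsCycleIn G n f →
    ∃ i j : ZMod n, j ≠ i ∧ j ≠ i + 1 ∧ j ≠ i - 1 ∧ G.Adj (f i) (f j)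

/-- `G` is strongly chordal: chordal, and every even cycle of length at least 6 has
an odd chord (a chord joining two vertices an odd distance apart along the cycle). -/
def StronglyChordal {V : Type} (G : SimpleGraph V) : Prop :=
  Chordal G ∧ ∀ n : ℕ, 6 ≤ n → Even n → ∀ f : ZMod n → V, IsCycleIn G n f →
    ∃ i j : ZMod n, Odd ((j - i).val) ∧ j ≠ i + 1 ∧ j ≠ i - 1 ∧ G.Adj (f i) (f j)

/-- Vertices of the even interior gadget for `k = 2q`: `t`, `b`, `z1`, `z2`,
`x i` for `i : Fin q` (representing `x_{i+1}`), and `y i` for `i : Fin (q-1)`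
(representing `y_{i+2}`). -/
inductive JVert (q : ℕ) : Type where
  | t : JVert q
  | b : JVert q
  | z1 : JVert q
  | z2 : JVert q
  | x : Fin q → JVert q
  | y : Fin (q - 1) → JVert q

/-- The even interior gadget `J_k` for even `k = 2q ≥ 6`: edges `t x_i` for all
`1 ≤ i ≤ q`; `b x_i`, `z1 x_i`, `z2 x_i` for all `2 ≤ i ≤ q`; `x_i x_j` for `i < j`;
`y_i x_j` for `2 ≤ i ≤ j ≤ q`; `b y_q`; `b z1`; and `b z2`. -/
def evenGadget (q : ℕ) : SimpleGraph (JVert q) :=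
  SimpleGraph.fromRel (fun u v => match u, v with
    | .t, .x _ => True
    | .b, .x i => 1 ≤ (i : ℕ)
    | .z1, .x i => 1 ≤ (i : ℕ)
    | .z2, .x i => 1 ≤ (i : ℕ)
    | .x i, .x j => i ≠ j
    | .y a, .x c => (a : ℕ) + 1 ≤ (c : ℕ)
    | .b, .y a => (a : ℕ) = q - 2
    | .b, .z1 => True
    | .b, .z2 => True
    | _, _ => False)

/-!
The root is a caterpillar: a spine of `k` vertices with, for each vertex `v` of `J_k`, a pendant
path (leg) of length `h v` hanging at spine vertex `p v`. Two leg tips are at distance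
`h u + |p u - p v| + h v`, so being a `k`-leaf root reduces to one arithmetic inequality per pair
of vertices. `t` hangs at one end of the spine with a leg of length 1, `b` at the other end with a
leg of length 2, next to the leg of `x_q`, of length 1; this gives `m(t) = k - 1` and `m(b) = 4`.

Tree distances are computed through potentials: a function that vanishes at `u`, increases by at
most one along every edge and decreases along some edge at every other vertex is the distance
from `u`. The depth from one end of the spine also rules out cycles, because every vertex has at
most one neighbour of smaller depth.
-/

namespace SimpleGraph

variable {W : Type*} {G : SimpleGraph W}

lemma Walk.le_add_length_of_adj_le {φ : W → ℕ} (hφ : ∀ a b, G.Adj a b → φ b ≤ φ a + 1)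
    {a b : W} (p : G.Walk a b) : φ b ≤ φ a + p.length := by
  induction p with
  | nil => simp
  | cons hadj _ ih => have := hφ _ _ hadj; simp only [Walk.length_cons]; omega

lemma reachable_and_dist_le_of_descent {u : W} {φ : W → ℕ}
    (hdesc : ∀ w, w ≠ u → ∃ w', G.Adj w w' ∧ φ w' < φ w) (w : W) :
    G.Reachable u w ∧ G.dist u w ≤ φ w := by
  induction h : φ w using Nat.strong_induction_on generalizing w with
  | _ n ih =>
    by_cases hwu : w = u
    · subst hwu; simp
    obtain ⟨w', hadj, hlt⟩ := hdesc w hwu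
    obtain ⟨hr, hd⟩ := ih (φ w') (h ▸ hlt) w' rfl
    obtain ⟨p, hp⟩ := hr.exists_walk_length_eq_dist
    have := G.dist_le (p.concat hadj.symm)
    rw [Walk.length_concat] at this
    exact ⟨hr.trans hadj.symm.reachable, by omega⟩

lemma dist_eq_of_descent {u : W} {φ : W → ℕ} (hu : φ u = 0)
    (hdesc : ∀ w, w ≠ u → ∃ w', G.Adj w w' ∧ φ w' < φ w)
    (hφ : ∀ a b, G.Adj a b → φ b ≤ φ a + 1) (w : W) : G.dist u w = φ w := by
  obtain ⟨hr, hd⟩ := reachable_and_dist_le_of_descent hdesc w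
  obtain ⟨p, hp⟩ := hr.exists_walk_length_eq_dist
  have := p.le_add_length_of_adj_le hφ
  omega

lemma isAcyclic_of_unique_lower_neighbor {α : Type*} [LinearOrder α] {φ : W → α}
    (hne : ∀ a b, G.Adj a b → φ a ≠ φ b)
    (huniq : ∀ w a b, G.Adj w a → G.Adj w b → φ a < φ w → φ b < φ w → a = b) :
    G.IsAcyclic := by
  intro v c hc
  classical
  obtain ⟨m, hm, hmax⟩ := c.support.toFinset.exists_max_image φ ⟨v, by simp⟩
  rw [List.mem_toFinset] at hm
  set c' := c.rotate m hm
  have hc' : c'.IsCycle := hc.rotate hm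
  have hnil : ¬ c'.Nil := hc'.not_nil
  have lower : ∀ {a : W}, G.Adj m a → a ∈ c'.support → φ a < φ m := fun {a} hadj ha =>
    lt_of_le_of_ne (hmax a (by simpa [c'] using ha)) (hne _ _ hadj).symm
  exact hc'.snd_ne_penultimate <| huniq m _ _ (c'.adj_snd hnil) (c'.adj_penultimate hnil).symm
    (lower (c'.adj_snd hnil) (c'.getVert_mem_support 1))
    (lower (c'.adj_penultimate hnil).symm (c'.getVert_mem_support _))

end SimpleGraph

namespace Caterpillar

variable {V : Type}

/-- Spine vertices are `inl x`; `inr (v, j)` is the vertex at distance `j` from the spine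
on the leg of `v`, which hangs at spine vertex `p v`. -/
def Adj (p : V → ℕ) : ℕ ⊕ (V × ℕ) → ℕ ⊕ (V × ℕ) → Prop
  | .inl x, .inl y => x + 1 = y ∨ y + 1 = x
  | .inl x, .inr (v, j) => j = 1 ∧ p v = x
  | .inr (v, j), .inl x => j = 1 ∧ p v = x
  | .inr (v, i), .inr (w, j) => v = w ∧ (i + 1 = j ∨ j + 1 = i)

def ambient (p : V → ℕ) : SimpleGraph (ℕ ⊕ (V × ℕ)) where
  Adj := Adj p
  symm := ⟨by rintro (x | ⟨v, i⟩) (y | ⟨w, j⟩) hxy <;> simp only [Adj] at hxy ⊢ <;> grind⟩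
  loopless := ⟨by rintro (x | ⟨v, i⟩) hx <;> simp only [Adj] at hx <;> omega⟩

def IsVert (n : ℕ) (h : V → ℕ) : ℕ ⊕ (V × ℕ) → Prop
  | .inl x => x < n
  | .inr (v, j) => 1 ≤ j ∧ j ≤ h v

abbrev Vert (V : Type) (n : ℕ) (h : V → ℕ) := {w : ℕ ⊕ (V × ℕ) // IsVert n h w}

/-- The caterpillar with spine `0, …, n - 1` and, for each `v : V`, a leg of length `h v`
attached to the spine vertex `p v`. -/
def _root_.caterpillar (n : ℕ) (p h : V → ℕ) : SimpleGraph (Vert V n h) :=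
  (ambient p).comap Subtype.val

def tip {h : V → ℕ} (n : ℕ) (hh : ∀ v, 0 < h v) (v : V) : Vert V n h :=
  ⟨.inr (v, h v), hh v, le_rfl⟩

def depth (p : V → ℕ) : ℕ ⊕ (V × ℕ) → ℕ
  | .inl x => x
  | .inr (v, j) => p v + j

open Classical in
noncomputable def tipDist (p h : V → ℕ) (u : V) : ℕ ⊕ (V × ℕ) → ℕ
  | .inl x => h u + Nat.dist (p u) x
  | .inr (v, j) => if v = u then h u - j else h u + Nat.dist (p u) (p v) + j

variable {n : ℕ} {p h : V → ℕ}

@[simp] lemma val_tip (hh : ∀ v, 0 < h v) (v : V) : (tip n hh v).1 = .inr (v, h v) := rfl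

lemma tip_injective (hh : ∀ v, 0 < h v) : Function.Injective (tip (V := V) n hh) :=
  fun _ _ huv => (Prod.mk.inj (Sum.inr.inj (congrArg Subtype.val huv))).1

instance [Finite V] : Finite (Vert V n h) := by
  let g : Fin n ⊕ (Σ v, Fin (h v)) → Vert V n h
    | .inl x => ⟨.inl x, x.isLt⟩
    | .inr ⟨v, j⟩ => ⟨.inr (v, j + 1), by simp, j.isLt⟩
  refine Finite.of_surjective g ?_
  rintro ⟨x | ⟨v, j⟩, hw⟩
  · exact ⟨.inl ⟨x, hw⟩, rfl⟩
  · obtain ⟨hj1, hj2⟩ : 1 ≤ j ∧ j ≤ h v := hw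
    refine ⟨.inr ⟨v, ⟨j - 1, by omega⟩⟩, Subtype.ext ?_⟩
    simp only [g, Nat.sub_add_cancel hj1]

lemma caterpillar_adj {a b : Vert V n h} : (caterpillar n p h).Adj a b ↔ Adj p a.1 b.1 := Iff.rfl

lemma exists_adj_depth_lt (hn : 0 < n) (hp : ∀ v, p v < n) (w : Vert V n h)
    (hw : w ≠ ⟨.inl 0, hn⟩) : ∃ w', (caterpillar n p h).Adj w w' ∧ depth p w' < depth p w := by
  obtain ⟨x | ⟨v, j⟩, hw'⟩ := w
  · have hx : x < n := hw'
    have hx0 : x ≠ 0 := by rintro rfl; exact hw rfl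
    exact ⟨⟨.inl (x - 1), show x - 1 < n by omega⟩, Or.inr (by omega),
      by simp only [depth]; omega⟩
  · obtain ⟨hj1, hj2⟩ : 1 ≤ j ∧ j ≤ h v := hw'
    rcases hj1.eq_or_lt with rfl | hj
    · exact ⟨⟨.inl (p v), hp v⟩, ⟨rfl, rfl⟩, by simp [depth]⟩
    · exact ⟨⟨.inr (v, j - 1), show 1 ≤ j - 1 ∧ j - 1 ≤ h v by omega⟩,
        ⟨rfl, by omega⟩,
        by simp only [depth]; omega⟩

lemma depth_ne_of_adj {a b : Vert V n h} (hab : (caterpillar n p h).Adj a b) :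
    depth p a ≠ depth p b := by
  obtain ⟨x | ⟨v, i⟩, ha⟩ := a <;> obtain ⟨y | ⟨w, j⟩, hb⟩ := b <;>
    simp only [caterpillar_adj, Adj] at hab <;>
    simp only [depth] <;> grind

lemma eq_of_adj_of_depth_lt {w a b : Vert V n h} (ha : (caterpillar n p h).Adj w a)
    (hb : (caterpillar n p h).Adj w b) (hda : depth p a < depth p w)
    (hdb : depth p b < depth p w) : a = b := by
  obtain ⟨x | ⟨v, i⟩, hw⟩ := w <;> obtain ⟨y | ⟨u, j⟩, ha'⟩ := a <;>
    obtain ⟨z | ⟨u', j'⟩, hb'⟩ := b <;>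
    simp only [caterpillar_adj, Adj, depth] at ha hb hda hdb <;>
    apply Subtype.ext <;> simp only [IsVert] at ha' hb' <;> grind

theorem isTree_caterpillar (hn : 0 < n) (hp : ∀ v, p v < n) : (caterpillar n p h).IsTree where
  connected := (connected_iff_exists_forall_reachable _).2 ⟨_, fun w =>
    (reachable_and_dist_le_of_descent (exists_adj_depth_lt hn hp) w).1⟩
  isAcyclic := isAcyclic_of_unique_lower_neighbor (fun _ _ => depth_ne_of_adj)
    (fun _ _ _ => eq_of_adj_of_depth_lt)

lemma exists_adj_tipDist_lt (hp : ∀ v, p v < n) (hh : ∀ v, 0 < h v) (u : V) (w : Vert V n h)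
    (hw : w ≠ tip n hh u) :
    ∃ w', (caterpillar n p h).Adj w w' ∧ tipDist p h u w' < tipDist p h u w := by
  obtain ⟨x | ⟨v, j⟩, hw'⟩ := w
  · have hx : x < n := hw'
    have hpu := hp u
    rcases lt_trichotomy x (p u) with hlt | rfl | hgt
    · exact ⟨⟨.inl (x + 1), show x + 1 < n by omega⟩, Or.inl rfl,
        by simp only [tipDist, Nat.dist]; omega⟩
    · exact ⟨⟨.inr (u, 1), show 1 ≤ 1 ∧ 1 ≤ h u from ⟨le_rfl, hh u⟩⟩, ⟨rfl, rfl⟩,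
        by simp only [tipDist, ↓reduceIte, Nat.dist]; have := hh u; omega⟩
    · exact ⟨⟨.inl (x - 1), show x - 1 < n by omega⟩, Or.inr (by omega),
        by simp only [tipDist, Nat.dist]; omega⟩
  · obtain ⟨hj1, hj2⟩ : 1 ≤ j ∧ j ≤ h v := hw'
    by_cases hvu : v = u
    · subst hvu
      have hj : j ≠ h v := by rintro rfl; exact hw rfl
      exact ⟨⟨.inr (v, j + 1), show 1 ≤ j + 1 ∧ j + 1 ≤ h v by omega⟩,
        ⟨rfl, by omega⟩, by simp only [tipDist, ↓reduceIte]; omega⟩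
    · rcases hj1.eq_or_lt with rfl | hj
      · exact ⟨⟨.inl (p v), hp v⟩, ⟨rfl, rfl⟩, by simp [tipDist, hvu]⟩
      · exact ⟨⟨.inr (v, j - 1), show 1 ≤ j - 1 ∧ j - 1 ≤ h v by omega⟩,
          ⟨rfl, by omega⟩, by simp only [tipDist, if_neg hvu]; omega⟩

lemma tipDist_le_of_adj (u : V) {a b : Vert V n h} (hab : (caterpillar n p h).Adj a b) :
    tipDist p h u b ≤ tipDist p h u a + 1 := by
  obtain ⟨x | ⟨v, i⟩, ha⟩ := a <;> obtain ⟨y | ⟨w, j⟩, hb⟩ := b <;>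
    simp only [caterpillar_adj, Adj] at hab
  · simp only [tipDist, Nat.dist]; omega
  · obtain ⟨rfl, rfl⟩ := hab
    simp only [tipDist, Nat.dist]; split_ifs with hvu <;> (try subst hvu) <;> omega
  · obtain ⟨rfl, rfl⟩ := hab
    have hi : 1 ≤ h v := ha.2
    simp only [tipDist, Nat.dist]; split_ifs with hvu <;> (try subst hvu) <;> omega
  · obtain ⟨rfl, hij⟩ := hab
    have hi : i ≤ h v := ha.2
    simp only [tipDist]; split_ifs with hvu <;> (try subst hvu) <;> omega

lemma dist_tip (hp : ∀ v, p v < n) (hh : ∀ v, 0 < h v) (u : V) (w : Vert V n h) :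
    (caterpillar n p h).dist (tip n hh u) w = tipDist p h u w :=
  dist_eq_of_descent (by simp [tip, tipDist]) (exists_adj_tipDist_lt hp hh u)
    (fun _ _ => tipDist_le_of_adj u) w

lemma dist_tip_tip (hp : ∀ v, p v < n) (hh : ∀ v, 0 < h v) {u v : V} (huv : u ≠ v) :
    (caterpillar n p h).dist (tip n hh u) (tip n hh v) = h u + Nat.dist (p u) (p v) + h v := by
  rw [dist_tip hp hh]
  simp [tip, tipDist, huv.symm]

lemma isLeafVert_tip (hp : ∀ v, p v < n) (hh : ∀ v, 0 < h v) (v : V) :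
    IsLeafVert (caterpillar n p h) (tip n hh v) := by
  refine existsUnique_of_exists_of_unique ?_ ?_
  · by_cases hv : h v = 1
    · exact ⟨⟨.inl (p v), hp v⟩, ⟨hv, rfl⟩⟩
    · have := hh v
      exact ⟨⟨.inr (v, h v - 1), show 1 ≤ h v - 1 ∧ h v - 1 ≤ h v by omega⟩,
        ⟨rfl, Or.inr (by omega)⟩⟩
  · rintro ⟨x | ⟨u, i⟩, ha⟩ ⟨y | ⟨w, j⟩, hb⟩ hva hvb <;>
      simp only [caterpillar_adj, val_tip, Adj] at hva hvb <;> apply Subtype.ext <;>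
      simp only [IsVert] at ha hb <;> grind

lemma exists_tip_eq_of_isLeafVert (hn : 2 ≤ n) (hp : ∀ v, p v < n) (hh : ∀ v, 0 < h v)
    (hfirst : ∃ v, p v = 0) (hlast : ∃ v, p v + 1 = n) {w : Vert V n h}
    (hw : IsLeafVert (caterpillar n p h) w) : ∃ v, tip n hh v = w := by
  obtain ⟨x | ⟨v, j⟩, hw'⟩ := w
  · exfalso
    have hx : x < n := hw'
    obtain ⟨v₀, hv₀⟩ := hfirst
    obtain ⟨v₁, hv₁⟩ := hlast
    have hleg : ∀ v, IsVert n h (.inr (v, 1)) := fun v => ⟨le_rfl, hh v⟩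
    by_cases hx0 : x = 0
    · subst hx0
      exact absurd (ExistsUnique.unique hw (y₁ := ⟨.inl 1, show 1 < n by omega⟩)
        (y₂ := ⟨.inr (v₀, 1), hleg v₀⟩) (Or.inl rfl) ⟨rfl, hv₀⟩) (by simp [Subtype.ext_iff])
    by_cases hxn : x + 1 = n
    · exact absurd (ExistsUnique.unique hw (y₁ := ⟨.inl (x - 1), show x - 1 < n by omega⟩)
        (y₂ := ⟨.inr (v₁, 1), hleg v₁⟩) (Or.inr (by omega)) ⟨rfl, by omega⟩)
        (by simp [Subtype.ext_iff])
    · exact absurd (ExistsUnique.unique hw (y₁ := ⟨.inl (x - 1), show x - 1 < n by omega⟩)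
        (y₂ := ⟨.inl (x + 1), show x + 1 < n by omega⟩) (Or.inr (by omega)) (Or.inl rfl))
        (by simp [Subtype.ext_iff])
  · have hj : 1 ≤ j ∧ j ≤ h v := hw'
    rcases hj.2.eq_or_lt with rfl | hjv
    · exact ⟨v, rfl⟩
    exfalso
    have hup : (caterpillar n p h).Adj ⟨.inr (v, j), hw'⟩
        ⟨.inr (v, j + 1), show 1 ≤ j + 1 ∧ j + 1 ≤ h v by omega⟩ := ⟨rfl, Or.inl rfl⟩
    by_cases hj1 : j = 1
    · subst hj1
      exact absurd (ExistsUnique.unique hw hup (y₂ := ⟨.inl (p v), hp v⟩) ⟨rfl, rfl⟩)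
        (by simp [Subtype.ext_iff])
    · exact absurd (ExistsUnique.unique hw hup
        (y₂ := ⟨.inr (v, j - 1), show 1 ≤ j - 1 ∧ j - 1 ≤ h v by omega⟩) ⟨rfl, Or.inr (by omega)⟩)
        (by simp only [Subtype.ext_iff, Sum.inr.injEq, Prod.mk.injEq]; omega)

theorem isLeafRoot_caterpillar [Finite V] {G : SimpleGraph V} {k : ℕ} (hn : 2 ≤ n)
    (hp : ∀ v, p v < n) (hh : ∀ v, 0 < h v) (hfirst : ∃ v, p v = 0)
    (hlast : ∃ v, p v + 1 = n)
    (hG : ∀ u v, u ≠ v → (G.Adj u v ↔ h u + Nat.dist (p u) (p v) + h v ≤ k)) :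
    IsLeafRoot G k (caterpillar n p h) (tip n hh) :=
  ⟨inferInstance, isTree_caterpillar (by omega) hp, tip_injective hh,
    fun _ => ⟨by rintro ⟨v, rfl⟩; exact isLeafVert_tip hp hh v,
      exists_tip_eq_of_isLeafVert hn hp hh hfirst hlast⟩,
    fun u v huv => by rw [dist_tip_tip hp hh huv]; exact hG u v huv⟩

lemma mval_tip_eq (hp : ∀ v, p v < n) (hh : ∀ v, 0 < h v) {v : V} {d : ℕ}
    (hex : ∃ u ≠ v, h u + Nat.dist (p u) (p v) + h v = d)
    (hle : ∀ u ≠ v, d ≤ h u + Nat.dist (p u) (p v) + h v) :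
    mval (caterpillar n p h) (tip n hh) v = d := by
  refine IsLeast.csInf_eq ⟨?_, ?_⟩
  · obtain ⟨u, hu, rfl⟩ := hex
    exact ⟨u, hu, dist_tip_tip hp hh hu⟩
  · rintro _ ⟨u, hu, rfl⟩
    rw [dist_tip_tip hp hh hu]
    exact hle u hu

end Caterpillar

instance (q : ℕ) : Finite (JVert q) :=
  Finite.of_injective (β := Fin 4 ⊕ Fin q ⊕ Fin (q - 1))
    (fun | .t => .inl 0 | .b => .inl 1 | .z1 => .inl 2 | .z2 => .inl 3
         | .x i => .inr (.inl i) | .y a => .inr (.inr a))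
    (by rintro (_ | _ | _ | _ | _ | _) (_ | _ | _ | _ | _ | _) h <;> simp_all)

def gadgetPos (q : ℕ) : JVert q → ℕ
  | .t => 0
  | .b => 2 * q - 1
  | .z1 => q + 1
  | .z2 => q + 2
  | .x i => q - 1 + i
  | .y a => if (a : ℕ) = q - 2 then 2 * q - 1 else q + a

def gadgetLeg (q : ℕ) : JVert q → ℕ
  | .t => 1
  | .b => 2
  | .z1 => q
  | .z2 => q
  | .x i => if (i : ℕ) = q - 1 then 1 else q - 1 - i
  | .y a => if (a : ℕ) = q - 2 then 2 * q - 2 else q + 1 + a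

lemma evenGadget_adj_iff {q : ℕ} (hq : 3 ≤ q) {u v : JVert q} (huv : u ≠ v) :
    (evenGadget q).Adj u v ↔
      gadgetLeg q u + Nat.dist (gadgetPos q u) (gadgetPos q v) + gadgetLeg q v ≤ 2 * q := by
  cases u <;> cases v <;>
    simp [evenGadget, gadgetPos, gadgetLeg, Nat.dist, Fin.ext_iff] at huv ⊢ <;>
    (try split_ifs) <;> omega

lemma gadgetPos_lt {q : ℕ} (hq : 3 ≤ q) (v : JVert q) : gadgetPos q v < 2 * q := by
  cases v <;> simp only [gadgetPos] <;> (try split_ifs) <;> omega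

lemma gadgetLeg_pos {q : ℕ} (hq : 3 ≤ q) (v : JVert q) : 0 < gadgetLeg q v := by
  cases v <;> simp only [gadgetLeg] <;> (try split_ifs) <;> omega

open Caterpillar in
theorem even_gadget_root_R (q : ℕ) (hq : 3 ≤ q) (k : ℕ) (hk : k = 2 * q) :
    ∃ (W : Type) (R : SimpleGraph W) (f : JVert q → W),
      IsLeafRoot (evenGadget q) k R f ∧
      mval R f JVert.t = k - 1 ∧ mval R f JVert.b = 4 := by
  subst hk
  have hp := gadgetPos_lt hq
  have hh := gadgetLeg_pos hq
  refine ⟨_, caterpillar (2 * q) (gadgetPos q) (gadgetLeg q), tip (2 * q) hh,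
    isLeafRoot_caterpillar (by omega) hp hh ⟨.t, rfl⟩ ⟨.b, by simp only [gadgetPos]; omega⟩
      (fun _ _ => evenGadget_adj_iff hq), ?_, ?_⟩
  · refine mval_tip_eq hp hh ⟨.x ⟨0, by omega⟩, by simp, ?_⟩ fun u hu => ?_
    · simp only [gadgetPos, gadgetLeg, Nat.dist]; split_ifs <;> omega
    · cases u <;> simp_all [gadgetPos, gadgetLeg, Nat.dist] <;> (try split_ifs) <;> omega
  · refine mval_tip_eq hp hh ⟨.x ⟨q - 1, by omega⟩, by simp, ?_⟩ fun u hu => ?_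
    · simp only [gadgetPos, gadgetLeg, Nat.dist]; split_ifs <;> omega
    · cases u <;> simp_all [gadgetPos, gadgetLeg, Nat.dist] <;> (try split_ifs) <;> omega
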